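/- Let d ≥ 1, let h be a complex-valued Schwartz function on ℝ^d, and let p ∈ MvPolynomial (Fin d) ℝ be a harmonic polynomial (∑_i pderiv i (pderiv i p) = 0). Then ∫_{ℝ^d} (eval at x of p) · (Δh)(x) dx = 0, where Δh(x) = ∑_{i=1}^d ∂²h/∂x_i²(x) is the Laplacian of h. -/

import Mathlib

/-!
Integrating by parts twice along each coordinate direction moves the Laplacian from `h` onto
the polynomial: `∫ p · Δh = ∫ (Δp) · h`, and `Δp = 0`. There are no boundary terms because a
polynomial has temperate growth, so its products with Schwartz functions are again Schwartz,
hence integrable.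
-/

open Real MeasureTheory MvPolynomial

/-- The Laplacian of `g : ℝ^d → ℂ`: the sum of the second directional derivatives of `g`
along the standard basis vectors. -/
noncomputable def laplacian {d : ℕ} (g : EuclideanSpace ℝ (Fin d) → ℂ)
    (x : EuclideanSpace ℝ (Fin d)) : ℂ :=
  ∑ i : Fin d,
    fderiv ℝ (fun y => fderiv ℝ g y (EuclideanSpace.single i 1)) x (EuclideanSpace.single i 1)

open SchwartzMap LineDeriv
open scoped Laplacian

section IntegrationByParts

variable {D F : Type*} [NormedAddCommGroup D] [NormedSpace ℝ D] [MeasurableSpace D]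
  [BorelSpace D] {μ : Measure D} [NormedAddCommGroup F] [NormedSpace ℝ F]

theorem Function.HasTemperateGrowth.integrable_smul [SecondCountableTopology D]
    [μ.HasTemperateGrowth] {g : D → ℝ} (hg : g.HasTemperateGrowth) (f : 𝓢(D, F)) :
    Integrable (fun x ↦ g x • f x) μ := by
  rw [← smulLeftCLM_apply hg f]
  exact integrable _

theorem SchwartzMap.integral_smul_lineDerivOp_eq_neg_of_hasLineDerivAt [FiniteDimensional ℝ D]
    [μ.IsAddHaarMeasure] {g g' : D → ℝ} (hg : g.HasTemperateGrowth)
    (hg' : g'.HasTemperateGrowth) {v : D} (hgv : ∀ x, HasLineDerivAt ℝ g (g' x) x v)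
    (f : 𝓢(D, F)) :
    ∫ x, g x • ∂_{v} f x ∂μ = -∫ x, g' x • f x ∂μ :=
  integral_bilinear_hasLineDerivAt_right_eq_neg_left_of_integrable
    (B := ContinuousLinearMap.lsmul ℝ ℝ) (hg'.integrable_smul f) (hg.integrable_smul (∂_{v} f))
    (hg.integrable_smul f) (fun x _ ↦ hgv x) fun x _ ↦ (f.hasFDerivAt x).hasLineDerivAt v

end IntegrationByParts

namespace MvPolynomial

variable {ι : Type*} [Fintype ι]

theorem hasTemperateGrowth_eval (p : MvPolynomial ι ℝ) :
    (fun x : EuclideanSpace ℝ ι ↦ eval (fun i ↦ x i) p).HasTemperateGrowth := by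
  induction p using MvPolynomial.induction_on with
  | C a => simp [Function.HasTemperateGrowth.const a]
  | add p q hp hq => simp only [eval_add]; exact hp.add hq
  | mul_X p j hp =>
    simp only [eval_mul, eval_X]
    exact hp.mul (EuclideanSpace.proj j).hasTemperateGrowth

variable [DecidableEq ι]

theorem hasLineDerivAt_eval (p : MvPolynomial ι ℝ) (i : ι) (x : EuclideanSpace ℝ ι) :
    HasLineDerivAt ℝ (fun y : EuclideanSpace ℝ ι ↦ eval (fun j ↦ y j) p)
      (eval (fun j ↦ x j) (pderiv i p)) x (EuclideanSpace.single i 1) := by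
  induction p using MvPolynomial.induction_on with
  | C a => simpa using (hasFDerivAt_const a x).hasLineDerivAt (EuclideanSpace.single i (1 : ℝ))
  | add p q hp hq => simp only [map_add]; exact HasDerivAt.add hp hq
  | mul_X p j hp =>
    have hcoord := ((EuclideanSpace.proj j : EuclideanSpace ℝ ι →L[ℝ] ℝ).hasFDerivAt
      (x := x)).hasLineDerivAt (EuclideanSpace.single i 1)
    simp only [eval_mul, eval_X]
    refine (HasDerivAt.mul hp hcoord).congr_deriv ?_
    rcases eq_or_ne j i with rfl | hji <;> simp [Derivation.leibniz, pderiv_X, *] <;> ring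

theorem integral_eval_smul_laplacian {F : Type*} [NormedAddCommGroup F] [NormedSpace ℝ F]
    (p : MvPolynomial ι ℝ) (f : 𝓢(EuclideanSpace ℝ ι, F)) :
    ∫ x, eval (fun j ↦ x j) p • Δ f x
      = ∫ x, eval (fun j ↦ x j) (∑ i, pderiv i (pderiv i p)) • f x := by
  have twice (i : ι) : ∫ x, eval (fun j ↦ x j) p • ∂_{EuclideanSpace.single i (1 : ℝ)}
        (∂_{EuclideanSpace.single i (1 : ℝ)} f) x
      = ∫ x, eval (fun j ↦ x j) (pderiv i (pderiv i p)) • f x := by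
    rw [integral_smul_lineDerivOp_eq_neg_of_hasLineDerivAt (hasTemperateGrowth_eval p)
        (hasTemperateGrowth_eval _) (hasLineDerivAt_eval p i),
      integral_smul_lineDerivOp_eq_neg_of_hasLineDerivAt (hasTemperateGrowth_eval _)
        (hasTemperateGrowth_eval _) (hasLineDerivAt_eval _ i), neg_neg]
  rw [laplacian_eq_sum (EuclideanSpace.basisFun ι ℝ)]
  simp only [EuclideanSpace.basisFun_apply, sum_apply, map_sum, Finset.smul_sum, Finset.sum_smul]
  rw [integral_finsetSum _ fun i _ ↦ (hasTemperateGrowth_eval p).integrable_smul _,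
    integral_finsetSum _ fun i _ ↦ (hasTemperateGrowth_eval _).integrable_smul _]
  simp_rw [twice]

end MvPolynomial

theorem laplacian_eq_schwartzMap_laplacian {d : ℕ} (h : 𝓢(EuclideanSpace ℝ (Fin d), ℂ))
    (x : EuclideanSpace ℝ (Fin d)) : laplacian h x = Δ h x := by
  simp only [laplacian, ← lineDerivOp_apply_eq_fderiv,
    laplacian_eq_sum (EuclideanSpace.basisFun (Fin d) ℝ), EuclideanSpace.basisFun_apply,
    sum_apply]

theorem harmonic_poly_annihilates_laplacian_general (d : ℕ)
    (h : SchwartzMap (EuclideanSpace ℝ (Fin d)) ℂ)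
    (p : MvPolynomial (Fin d) ℝ)
    (hp : ∑ i : Fin d, pderiv i (pderiv i p) = 0) :
    ∫ x : EuclideanSpace ℝ (Fin d),
      ((eval (fun i => x i) p : ℝ) : ℂ) * laplacian (⇑h) x = 0 := by
  simp_rw [laplacian_eq_schwartzMap_laplacian, ← Complex.real_smul, integral_eval_smul_laplacian,
    hp, map_zero, zero_smul, integral_zero]

/-- A harmonic polynomial, viewed as a tempered distribution, annihilates the image of the
Laplacian acting on Schwartz functions. -/
theorem harmonic_poly_annihilates_laplacian (d : ℕ) (hd : 1 ≤ d)
    (h : SchwartzMap (EuclideanSpace ℝ (Fin d)) ℂ)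
    (p : MvPolynomial (Fin d) ℝ)
    (hp : ∑ i : Fin d, pderiv i (pderiv i p) = 0) :
    ∫ x : EuclideanSpace ℝ (Fin d),
      ((eval (fun i => x i) p : ℝ) : ℂ) * laplacian (⇑h) x = 0 :=
  harmonic_poly_annihilates_laplacian_general d h p hp
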